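/- arXiv:1703.00770 — 3 statements merged into one kernel-verified Lean document; each statement's English description precedes it below -/
import Mathlib

section
/- Let I ⊆ [0,1] ∩ ℚ and define D(I) = { (m-1+∑_{j=1}^n i_j)/m : m ≥ 1, n ≥ 0, i_j ∈ I } ∩ [0,1]. Then D(D(I)) = D(I) ∪ {1}. In particular, D(I) is closed under the operation D up to adjoining 1. -/
/-- The derived coefficient set `D(I)` of a subset `I ⊆ [0,1]`:
`D(I) = { (m-1+∑_{j=1}^n i_j)/m : m ≥ 1, n ≥ 0, i_j ∈ I } ∩ [0,1]`. -/
def Dset (I : Set ℚ) : Set ℚ :=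
  {x | ∃ m : ℕ, 1 ≤ m ∧ ∃ (n : ℕ) (i : Fin n → ℚ), (∀ j, i j ∈ I) ∧
      x = ((m : ℚ) - 1 + ∑ j, i j) / m} ∩ Set.Icc 0 1

/-!
Write `C(S)` for the additive monoid generated by `S`, so that `x ∈ D(I)` means
`m x - (m - 1) ∈ C(I)` for some `m ≥ 1`, together with `0 ≤ x ≤ 1`. The set of `z` such that
`q z - e ∈ C(I)` for some naturals `1 ≤ q ≤ e + 1` contains `D(I)` and is closed under addition,
hence contains `C(D(I))`. For `x ∈ D(D(I))` this yields `q m x - (q m - q + e) ∈ C(I)`; as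
`C(I) ≥ 0` and `x ≤ 1`, we get `e ≤ q`, and either `e = q - 1`, so `x ∈ D(I)` with denominator
`q m`, or `e = q`, which forces `x = 1`. Conversely `1 = (2 - 1 + 1/2 + 1/2) / 2` with
`1/2 ∈ D(I)`.
-/

theorem AddSubmonoid.mem_closure_iff_exists_fin_sum {M : Type*} [AddCommMonoid M] {s : Set M}
    {x : M} :
    x ∈ closure s ↔ ∃ (n : ℕ) (f : Fin n → M), (∀ j, f j ∈ s) ∧ ∑ j, f j = x := by
  constructor
  · intro hx
    obtain ⟨l, hl, rfl⟩ := exists_list_of_mem_closure hx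
    exact ⟨l.length, l.get, fun j => hl _ (l.get_mem j), by rw [← List.sum_ofFn, List.ofFn_get]⟩
  · rintro ⟨n, f, hf, rfl⟩
    exact _root_.sum_mem fun j _ => subset_closure (hf j)

theorem AddSubmonoid.nonneg_of_mem_closure {R : Type*} [AddCommMonoid R] [PartialOrder R]
    [IsOrderedAddMonoid R] {s : Set R} (hs : ∀ a ∈ s, 0 ≤ a) {a : R}
    (ha : a ∈ closure s) : 0 ≤ a := by
  induction ha using closure_induction with
  | mem a ha => exact hs a ha
  | zero => exact le_rfl
  | add a b _ _ ha hb => exact add_nonneg ha hb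

theorem exists_mul_sub_mem_of_mem_closure {R : Type*} [CommRing R] {S : AddSubmonoid R}
    {T : Set R} (hT : ∀ y ∈ T, ∃ k : ℕ, 1 ≤ k ∧ k * y - (k - 1) ∈ S) {z : R}
    (hz : z ∈ AddSubmonoid.closure T) : ∃ q e : ℕ, 1 ≤ q ∧ q ≤ e + 1 ∧ q * z - e ∈ S := by
  induction hz using AddSubmonoid.closure_induction with
  | mem y hy =>
    obtain ⟨k, hk, hy⟩ := hT y hy
    exact ⟨k, k - 1, hk, by omega, by rwa [Nat.cast_sub hk, Nat.cast_one]⟩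
  | zero => exact ⟨1, 0, le_rfl, by omega, by simp⟩
  | add z₁ z₂ _ _ h₁ h₂ =>
    obtain ⟨q₁, e₁, hq₁, hqe₁, h₁⟩ := h₁
    obtain ⟨q₂, e₂, hq₂, hqe₂, h₂⟩ := h₂
    -- `q₁ q₂ ≤ q₂ e₁ + q₁ e₂ + 1` because `(q₁ - 1) (q₂ - 1) ≥ 0`
    refine ⟨q₁ * q₂, q₂ * e₁ + q₁ * e₂, Nat.one_le_iff_ne_zero.2 (by positivity), by nlinarith, ?_⟩
    convert S.add_mem (S.nsmul_mem h₁ q₂) (S.nsmul_mem h₂ q₁) using 1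
    simp only [nsmul_eq_mul]
    push_cast
    ring

theorem mem_Dset_iff {I : Set ℚ} {x : ℚ} :
    x ∈ Dset I ↔
      (∃ m : ℕ, 1 ≤ m ∧ m * x - (m - 1) ∈ AddSubmonoid.closure I) ∧ x ∈ Set.Icc 0 1 := by
  refine and_congr_left' (exists_congr fun m => and_congr_right fun hm => ?_)
  have hm : (m : ℚ) ≠ 0 := by positivity
  simp_rw [AddSubmonoid.mem_closure_iff_exists_fin_sum, eq_div_iff hm, eq_comm (b := m * x - _),
    sub_eq_iff_eq_add', mul_comm x]

theorem subset_Dset {I : Set ℚ} (hI : I ⊆ Set.Icc 0 1) : I ⊆ Dset I := fun x hx =>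
  mem_Dset_iff.2 ⟨⟨1, le_rfl, by simpa using AddSubmonoid.subset_closure hx⟩, hI hx⟩

theorem one_mem_Dset_Dset (I : Set ℚ) : 1 ∈ Dset (Dset I) := by
  have half : (2⁻¹ : ℚ) ∈ Dset I :=
    mem_Dset_iff.2 ⟨⟨2, one_le_two, by norm_num [AddSubmonoid.zero_mem]⟩, by norm_num, by norm_num⟩
  have h := add_mem (AddSubmonoid.subset_closure half) (AddSubmonoid.subset_closure half)
  exact mem_Dset_iff.2 ⟨⟨2, one_le_two, by norm_num at h ⊢; exact h⟩, by norm_num, by norm_num⟩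

theorem mem_Dset_or_eq_one_of_mem_Dset_Dset {I : Set ℚ} (hI : ∀ a ∈ I, 0 ≤ a) {x : ℚ}
    (hx : x ∈ Dset (Dset I)) : x ∈ Dset I ∨ x = 1 := by
  obtain ⟨⟨m, hm, hxm⟩, hx₀, hx₁⟩ := mem_Dset_iff.1 hx
  obtain ⟨q, e, hq, hqe, ha⟩ :=
    exists_mul_sub_mem_of_mem_closure (fun y hy => (mem_Dset_iff.1 hy).1) hxm
  have ha₀ := AddSubmonoid.nonneg_of_mem_closure hI ha
  have hqm : (0 : ℚ) < q * m := by positivity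
  have he : e ≤ q := by
    have : (e : ℚ) ≤ q := by nlinarith
    exact_mod_cast this
  obtain rfl | rfl : q = e + 1 ∨ e = q := by omega
  · refine .inl (mem_Dset_iff.2 ⟨⟨(e + 1) * m, by nlinarith, ?_⟩, hx₀, hx₁⟩)
    convert ha using 1
    push_cast
    ring
  · exact .inr (le_antisymm hx₁ (by nlinarith))

/-- For `I ⊆ [0,1] ∩ ℚ`, one has `D(D(I)) = D(I) ∪ {1}`; in particular `D(I)` is
closed under `D` up to adjoining `1`. -/
theorem stmt0 (I : Set ℚ) (hI : I ⊆ Set.Icc 0 1) :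
    Dset (Dset I) = Dset I ∪ {1} := by
  refine Set.Subset.antisymm (fun x hx => ?_) (Set.union_subset ?_ ?_)
  · exact mem_Dset_or_eq_one_of_mem_Dset_Dset (fun a ha => (hI ha).1) hx
  · exact subset_Dset Set.inter_subset_right
  · exact Set.singleton_subset_iff.2 (one_mem_Dset_Dset I)
end

section
/- Let Y be a regular surface (2-dimensional regular excellent scheme), E_1,…,E_r the exceptional curves of a resolution of a normal surface singularity, with negative-definite symmetric intersection matrix (E_i · E_j). Then for any divisor D supported on ∪E_i with D · E_i ≥ 0 for all i, one has D ≤ 0 (i.e., -D is effective). -/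
/-!
Write `x = x⁺ - x⁻` with `x⁺, x⁻ ≥ 0` of disjoint supports. Since the off-diagonal entries of
`M = -A` are nonpositive, `x⁺ᵀ M x⁻ ≤ 0`, hence `x⁺ᵀ M x⁺ = x⁺ᵀ M x + x⁺ᵀ M x⁻ ≤ 0` when
`M x ≤ 0`. Positive definiteness of `M` then forces `x⁺ = 0`.
-/

open Matrix

variable {ι R : Type*} [Fintype ι] [CommRing R] [LinearOrder R] [IsStrictOrderedRing R]

lemma posPart_mul_negPart_eq_zero (a : R) : a⁺ * a⁻ = 0 := by
  rcases le_total a 0 with h | h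
  · simp [posPart_of_nonpos h]
  · simp [negPart_of_nonneg h]

namespace Matrix

lemma dotProduct_mulVec_nonpos_of_disjoint {M : Matrix ι ι R}
    (hoff : ∀ i j, i ≠ j → M i j ≤ 0) {u v : ι → R} (hu : 0 ≤ u) (hv : 0 ≤ v)
    (huv : ∀ i, u i * v i = 0) : u ⬝ᵥ M *ᵥ v ≤ 0 := by
  simp only [dotProduct, mulVec, Finset.mul_sum]
  refine Finset.sum_nonpos fun i _ => Finset.sum_nonpos fun j _ => ?_
  rcases eq_or_ne i j with rfl | hij
  · rw [mul_left_comm, huv, mul_zero]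
  · exact mul_nonpos_of_nonneg_of_nonpos (hu i)
      (mul_nonpos_of_nonpos_of_nonneg (hoff i j hij) (hv j))

lemma posPart_dotProduct_mulVec_posPart_nonpos {M : Matrix ι ι R}
    (hoff : ∀ i j, i ≠ j → M i j ≤ 0) {x : ι → R} (hx : M *ᵥ x ≤ 0) :
    x⁺ ⬝ᵥ M *ᵥ x⁺ ≤ 0 := by
  have hsplit : x⁺ = x + x⁻ := sub_eq_iff_eq_add.mp (posPart_sub_negPart x)
  calc x⁺ ⬝ᵥ M *ᵥ x⁺ = x⁺ ⬝ᵥ M *ᵥ x + x⁺ ⬝ᵥ M *ᵥ x⁻ := by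
        nth_rw 2 [hsplit]; rw [mulVec_add, dotProduct_add]
    _ ≤ 0 := add_nonpos
        (Finset.sum_nonpos fun i _ =>
          mul_nonpos_of_nonneg_of_nonpos (posPart_nonneg (x i)) (hx i))
        (dotProduct_mulVec_nonpos_of_disjoint hoff (posPart_nonneg x) (negPart_nonneg x)
          fun i => posPart_mul_negPart_eq_zero (x i))

theorem PosDef.nonpos_of_mulVec_nonpos [StarRing R] [TrivialStar R] {M : Matrix ι ι R}
    (hM : M.PosDef) (hoff : ∀ i j, i ≠ j → M i j ≤ 0) {x : ι → R} (hx : M *ᵥ x ≤ 0) :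
    x ≤ 0 := by
  by_contra hpos
  have hquad := hM.dotProduct_mulVec_pos (x := x⁺) (by rwa [Ne, posPart_eq_zero])
  rw [star_trivial] at hquad
  exact (posPart_dotProduct_mulVec_posPart_nonpos hoff hx).not_gt hquad

end Matrix

theorem stmt5_general (r : ℕ) (A : Matrix (Fin r) (Fin r) ℝ)
    (hneg : (-A).PosDef) (hoff : ∀ i j, i ≠ j → 0 ≤ A i j)
    (x : Fin r → ℝ) (hx : ∀ i, 0 ≤ A.mulVec x i) :
    ∀ i, x i ≤ 0 := by
  refine hneg.nonpos_of_mulVec_nonpos (fun i j hij => ?_) ?_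
  · simpa using hoff i j hij
  · rw [neg_mulVec]
    exact neg_nonpos.mpr hx

/-- Negativity lemma for the exceptional intersection matrix of a resolution of a
normal surface singularity: if `A = (Eᵢ · Eⱼ)` is a symmetric negative-definite matrix
with nonnegative off-diagonal entries and `D = ∑ xᵢ Eᵢ` satisfies `D · Eᵢ ≥ 0` for all
`i`, then `D ≤ 0`, i.e. all `xᵢ ≤ 0`. -/
theorem stmt5 (r : ℕ) (A : Matrix (Fin r) (Fin r) ℝ) (hsymm : A.IsSymm)
    (hneg : (-A).PosDef) (hoff : ∀ i j, i ≠ j → 0 ≤ A i j)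
    (x : Fin r → ℝ) (hx : ∀ i, 0 ≤ A.mulVec x i) :
    ∀ i, x i ≤ 0 :=
  stmt5_general r A hneg hoff x hx
end

section
/- Let A be a symmetric negative-definite real r×r matrix with a_{ij} ≥ 0 for all i ≠ j. If x, y ∈ ℝ^r satisfy (Ax)_i ≤ 0 and (Ay)_i ≤ 0 for all i, and x, y ≥ 0 componentwise, then z = min(x, y) (componentwise minimum) also satisfies (Az)_i ≤ 0 for all i. -/
namespace Matrix

variable {n R : Type*} [Fintype n] [Semiring R] [PartialOrder R] [IsOrderedRing R]

theorem mulVec_apply_le_of_le_of_apply_eq {A : Matrix n n R}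
    (hA : ∀ i j, i ≠ j → 0 ≤ A i j) {z w : n → R} (hzw : z ≤ w) {i : n} (hi : z i = w i) :
    (A *ᵥ z) i ≤ (A *ᵥ w) i := by
  refine Finset.sum_le_sum fun j _ => ?_
  rcases eq_or_ne j i with rfl | hji
  · rw [hi]
  · exact mul_le_mul_of_nonneg_left (hzw j) (hA i j hji.symm)

end Matrix

theorem stmt19_general (r : ℕ) (A : Matrix (Fin r) (Fin r) ℝ)
    (hoff : ∀ i j, i ≠ j → 0 ≤ A i j)
    (x y : Fin r → ℝ)
    (hx : ∀ i, A.mulVec x i ≤ 0) (hy : ∀ i, A.mulVec y i ≤ 0) :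
    ∀ i, A.mulVec (fun j => min (x j) (y j)) i ≤ 0 := by
  intro i
  rcases le_total (x i) (y i) with hxy | hyx
  · exact (Matrix.mulVec_apply_le_of_le_of_apply_eq hoff (fun j => min_le_left _ _)
      (min_eq_left hxy)).trans (hx i)
  · exact (Matrix.mulVec_apply_le_of_le_of_apply_eq hoff (fun j => min_le_right _ _)
      (min_eq_right hyx)).trans (hy i)

/-- Let `A` be a symmetric negative-definite real `r × r` matrix with `aᵢⱼ ≥ 0` for
`i ≠ j`.  If `x, y ≥ 0` componentwise satisfy `(Ax)ᵢ ≤ 0` and `(Ay)ᵢ ≤ 0` for all `i`,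
then the componentwise minimum `z = min(x, y)` also satisfies `(Az)ᵢ ≤ 0` for all
`i`. -/
theorem stmt19 (r : ℕ) (A : Matrix (Fin r) (Fin r) ℝ) (hsymm : A.IsSymm)
    (hneg : (-A).PosDef) (hoff : ∀ i j, i ≠ j → 0 ≤ A i j)
    (x y : Fin r → ℝ) (hx0 : ∀ i, 0 ≤ x i) (hy0 : ∀ i, 0 ≤ y i)
    (hx : ∀ i, A.mulVec x i ≤ 0) (hy : ∀ i, A.mulVec y i ≤ 0) :
    ∀ i, A.mulVec (fun j => min (x j) (y j)) i ≤ 0 :=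
  stmt19_general r A hoff x y hx hy
end
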